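/- Fix $a > 2^n$ and $u \in L^\infty_c(\mathbb{R}^n)$ non-negative. For $k \in \mathbb{Z}$ let $\{Q_j^k\}_j$ be the Calderón–Zygmund cubes of $u$ at height $a^k$, and define the bad part $b_k(x) = \sum_j (u(x) - u_{Q_j^k})\chi_{Q_j^k}(x)$. Then for all $k$ and almost every $x$, $|b_k(x) - b_{k+1}(x)| \leq (1+a)2^n a^k$. -/

import Mathlib

open MeasureTheory Set

noncomputable section

/-- The standard dyadic cube `2^k([0,1)^n + m)` in `ℝⁿ`. -/
def stdCube (n : ℕ) (k : ℤ) (m : Fin n → ℤ) : Set (Fin n → ℝ) :=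
  {x | ∀ i, (2 : ℝ) ^ k * m i ≤ x i ∧ x i < (2 : ℝ) ^ k * (m i + 1)}

/-- The average `⨍_Q u = |Q|⁻¹ ∫_Q u`. -/
def cubeAvg (n : ℕ) (u : (Fin n → ℝ) → ℝ) (Q : Set (Fin n → ℝ)) : ℝ :=
  (volume Q).toReal⁻¹ * ∫ x in Q, u x

/-- `Q` is a Calderón–Zygmund cube of `u` at height `lam`: a maximal dyadic cube with
`⨍_Q u > lam`. -/
def IsCZCube (n : ℕ) (u : (Fin n → ℝ) → ℝ) (lam : ℝ) (k : ℤ) (m : Fin n → ℤ) : Prop :=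
  lam < cubeAvg n u (stdCube n k m) ∧
    ∀ (k' : ℤ) (m' : Fin n → ℤ), stdCube n k m ⊆ stdCube n k' m' →
      stdCube n k m ≠ stdCube n k' m' → cubeAvg n u (stdCube n k' m') ≤ lam

/-- The bad part `b_λ(x) = ∑_j (u(x) - u_{Q_j}) χ_{Q_j}(x)` of the Calderón–Zygmund
decomposition of `u` at height `lam`. -/
def badPart (n : ℕ) (u : (Fin n → ℝ) → ℝ) (lam : ℝ) (x : Fin n → ℝ) : ℝ :=
  ∑' q : {q : ℤ × (Fin n → ℤ) // IsCZCube n u lam q.1 q.2},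
    (stdCube n q.1.1 q.1.2).indicator
      (fun y => u y - cubeAvg n u (stdCube n q.1.1 q.1.2)) x

/-!
If `x` lies in Calderón–Zygmund cubes `Q` at height `a^k` and `Q'` at height `a^(k+1)`, then
`b_k(x) - b_{k+1}(x) = u_{Q'} - u_Q`, and both averages lie in `[0, 2ⁿ a^(k+1)]`. If `x` lies only
in `Q`, the Lebesgue differentiation theorem along the dyadic cubes shrinking to `x` gives
`u(x) ≤ a^(k+1)` almost everywhere, so `b_k(x) - b_{k+1}(x) = u(x) - u_Q` lies in
`[-2ⁿ a^k, a^(k+1)]`. Since the cubes at height `a^(k+1)` lie inside those at height `a^k`, both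
bad parts vanish at every other point. In all cases the difference is at most
`2ⁿ a^(k+1) ≤ (1 + a) 2ⁿ a^k`.
-/

open Filter Topology

def dyadicIndex (n : ℕ) (k : ℤ) (x : Fin n → ℝ) : Fin n → ℤ := fun i => ⌊x i / 2 ^ k⌋

variable {n : ℕ}

lemma mem_stdCube_iff {k : ℤ} {m : Fin n → ℤ} {x : Fin n → ℝ} :
    x ∈ stdCube n k m ↔ dyadicIndex n k x = m := by
  have h2 : (0 : ℝ) < 2 ^ k := zpow_pos two_pos k
  simp only [stdCube, Set.mem_ofPred_eq, funext_iff, dyadicIndex, Int.floor_eq_iff, le_div_iff₀ h2,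
    div_lt_iff₀ h2, mul_comm]

lemma mem_stdCube_dyadicIndex (k : ℤ) (x : Fin n → ℝ) : x ∈ stdCube n k (dyadicIndex n k x) :=
  mem_stdCube_iff.2 rfl

lemma dyadicIndex_of_le {k k' : ℤ} (h : k ≤ k') (x : Fin n → ℝ) :
    dyadicIndex n k' x = fun i => dyadicIndex n k x i / 2 ^ (k' - k).toNat := by
  have h2 : (2 : ℝ) ^ k' = 2 ^ k * ((2 ^ (k' - k).toNat : ℕ) : ℝ) := by
    rw [Nat.cast_pow, Nat.cast_ofNat, ← zpow_natCast, ← zpow_add₀ two_ne_zero,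
      Int.toNat_of_nonneg (sub_nonneg.2 h), add_sub_cancel]
  funext i
  simp only [dyadicIndex]
  rw [h2, ← div_div, Int.floor_div_natCast, Nat.cast_pow, Nat.cast_ofNat]

lemma stdCube_subset_of_le {k k' : ℤ} (h : k ≤ k') {m m' : Fin n → ℤ}
    (hmeet : (stdCube n k m ∩ stdCube n k' m').Nonempty) : stdCube n k m ⊆ stdCube n k' m' := by
  obtain ⟨x, hx, hx'⟩ := hmeet
  intro y hy
  rw [mem_stdCube_iff] at hx hx' hy ⊢
  rw [← hx', dyadicIndex_of_le h y, dyadicIndex_of_le h x, hx, hy]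

lemma stdCube_eq_pi (k : ℤ) (m : Fin n → ℤ) :
    stdCube n k m = univ.pi fun i => Ico (2 ^ k * (m i : ℝ)) (2 ^ k * (m i + 1)) := by
  ext x
  simp [stdCube, Set.mem_pi]

lemma measurableSet_stdCube (k : ℤ) (m : Fin n → ℤ) : MeasurableSet (stdCube n k m) := by
  rw [stdCube_eq_pi]
  exact MeasurableSet.univ_pi fun _ => measurableSet_Ico

lemma volume_stdCube_toReal (k : ℤ) (m : Fin n → ℤ) :
    (volume (stdCube n k m)).toReal = ((2 : ℝ) ^ k) ^ n := by
  have h2 : (0 : ℝ) ≤ 2 ^ k := (zpow_pos two_pos k).le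
  simp [stdCube_eq_pi, Real.volume_pi_Ico, ← mul_sub, ENNReal.toReal_ofReal h2]

lemma stdCube_nonempty (k : ℤ) (m : Fin n → ℤ) : (stdCube n k m).Nonempty :=
  ⟨fun i => 2 ^ k * m i,
    fun _ => ⟨le_rfl, mul_lt_mul_of_pos_left (lt_add_one _) (zpow_pos two_pos k)⟩⟩

lemma stdCube_injective (hn : n ≠ 0) :
    Function.Injective fun q : ℤ × (Fin n → ℤ) => stdCube n q.1 q.2 := by
  rintro ⟨k, m⟩ ⟨k', m'⟩ (h : stdCube n k m = stdCube n k' m')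
  have hside : (2 : ℝ) ^ k = 2 ^ k' := by
    refine (pow_left_inj₀ (zpow_pos two_pos k).le (zpow_pos two_pos k').le hn).1 ?_
    rw [← volume_stdCube_toReal k m, ← volume_stdCube_toReal k' m', h]
  obtain rfl : k = k' := zpow_right_injective₀ two_pos (by norm_num) hside
  obtain ⟨x, hx⟩ := stdCube_nonempty k m
  rw [(mem_stdCube_iff.1 hx).symm.trans (mem_stdCube_iff.1 (h ▸ hx))]

variable {u : (Fin n → ℝ) → ℝ}

lemma cubeAvg_stdCube (k : ℤ) (m : Fin n → ℤ) :
    cubeAvg n u (stdCube n k m) = (∫ x in stdCube n k m, u x) / ((2 : ℝ) ^ k) ^ n := by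
  rw [cubeAvg, volume_stdCube_toReal, inv_mul_eq_div]

lemma cubeAvg_nonneg (hu0 : 0 ≤ u) (k : ℤ) (m : Fin n → ℤ) : 0 ≤ cubeAvg n u (stdCube n k m) :=
  mul_nonneg (inv_nonneg.2 ENNReal.toReal_nonneg) (setIntegral_nonneg (measurableSet_stdCube k m)
    fun x _ => hu0 x)

lemma cubeAvg_le_two_pow_mul_cubeAvg (hint : Integrable u) (hu0 : 0 ≤ u) {k : ℤ}
    {m m' : Fin n → ℤ} (hsub : stdCube n k m ⊆ stdCube n (k + 1) m') :
    cubeAvg n u (stdCube n k m) ≤ 2 ^ n * cubeAvg n u (stdCube n (k + 1) m') := by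
  have hside : ((2 : ℝ) ^ (k + 1)) ^ n = 2 ^ n * ((2 : ℝ) ^ k) ^ n := by
    rw [zpow_add_one₀ two_ne_zero, mul_pow, mul_comm]
  rw [cubeAvg_stdCube, cubeAvg_stdCube, hside, ← mul_div_assoc,
    mul_div_mul_left _ _ (by positivity)]
  exact div_le_div_of_nonneg_right
    (setIntegral_mono_set hint.integrableOn (.of_forall hu0) hsub.eventuallyLE) (by positivity)

lemma cubeAvg_le_integral_div (hint : Integrable u) (hu0 : 0 ≤ u) (k : ℤ) (m : Fin n → ℤ) :
    cubeAvg n u (stdCube n k m) ≤ (∫ x, u x) / ((2 : ℝ) ^ k) ^ n := by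
  rw [cubeAvg_stdCube]
  exact div_le_div_of_nonneg_right (setIntegral_le_integral hint (.of_forall hu0)) (by positivity)

def czUnion (n : ℕ) (u : (Fin n → ℝ) → ℝ) (lam : ℝ) : Set (Fin n → ℝ) :=
  {x | ∃ k m, IsCZCube n u lam k m ∧ x ∈ stdCube n k m}

variable {lam : ℝ}

lemma IsCZCube.cubeAvg_le (hn : n ≠ 0) (hint : Integrable u) (hu0 : 0 ≤ u) {k : ℤ}
    {m : Fin n → ℤ} (h : IsCZCube n u lam k m) : cubeAvg n u (stdCube n k m) ≤ 2 ^ n * lam := by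
  obtain ⟨x, hx⟩ := stdCube_nonempty k m
  have hsub : stdCube n k m ⊆ stdCube n (k + 1) (dyadicIndex n (k + 1) x) :=
    stdCube_subset_of_le (by omega) ⟨x, hx, mem_stdCube_dyadicIndex _ x⟩
  have hne : stdCube n k m ≠ stdCube n (k + 1) (dyadicIndex n (k + 1) x) :=
    fun heq => by simpa using congrArg Prod.fst (@stdCube_injective n hn (k, m) (k + 1, _) heq)
  calc cubeAvg n u (stdCube n k m)
      ≤ 2 ^ n * cubeAvg n u (stdCube n (k + 1) (dyadicIndex n (k + 1) x)) :=
        cubeAvg_le_two_pow_mul_cubeAvg hint hu0 hsub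
    _ ≤ 2 ^ n * lam := by gcongr; exact h.2 _ _ hsub hne

lemma IsCZCube.eq_of_mem (hn : n ≠ 0) {k k' : ℤ} {m m' : Fin n → ℤ} {x : Fin n → ℝ}
    (h : IsCZCube n u lam k m) (h' : IsCZCube n u lam k' m') (hx : x ∈ stdCube n k m)
    (hx' : x ∈ stdCube n k' m') : (k, m) = (k', m') := by
  refine stdCube_injective hn (by_contra fun hne => ?_)
  rcases le_total k k' with hle | hle
  · exact (h'.1.trans_le (h.2 k' m' (stdCube_subset_of_le hle ⟨x, hx, hx'⟩) hne)).false
  · exact (h.1.trans_le (h'.2 k m (stdCube_subset_of_le hle ⟨x, hx', hx⟩) (Ne.symm hne))).false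

lemma eventually_cubeAvg_lt (hn : n ≠ 0) (hint : Integrable u) (hu0 : 0 ≤ u) (hlam : 0 < lam) :
    ∀ᶠ k in atTop, ∀ m, cubeAvg n u (stdCube n k m) < lam := by
  obtain ⟨N, hN⟩ := pow_unbounded_of_one_lt ((∫ x, u x) / lam) one_lt_two
  filter_upwards [eventually_ge_atTop (N : ℤ)] with k hk m
  have hscale : (2 : ℝ) ^ N ≤ ((2 : ℝ) ^ k) ^ n := calc
    (2 : ℝ) ^ N = 2 ^ (N : ℤ) := (zpow_natCast 2 N).symm
    _ ≤ 2 ^ k := zpow_le_zpow_right₀ one_le_two hk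
    _ ≤ (2 ^ k) ^ n := le_self_pow₀ (one_le_zpow₀ one_le_two (by omega)) hn
  calc cubeAvg n u (stdCube n k m) ≤ (∫ x, u x) / ((2 : ℝ) ^ k) ^ n :=
        cubeAvg_le_integral_div hint hu0 k m
    _ ≤ (∫ x, u x) / 2 ^ N := by gcongr; exact integral_nonneg hu0
    _ < lam := (div_lt_iff₀ (by positivity)).2 ((div_lt_iff₀' hlam).1 hN)

/-- Stopping time: the largest dyadic cube around `x` whose average exceeds `lam` is a
Calderón–Zygmund cube; it exists because averages over large cubes are small. -/
lemma mem_czUnion_of_lt_cubeAvg (hn : n ≠ 0) (hint : Integrable u) (hu0 : 0 ≤ u)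
    (hlam : 0 < lam) {k₀ : ℤ} {m₀ : Fin n → ℤ} {x : Fin n → ℝ} (hx : x ∈ stdCube n k₀ m₀)
    (havg : lam < cubeAvg n u (stdCube n k₀ m₀)) : x ∈ czUnion n u lam := by
  let P : ℤ → Prop := fun k => lam < cubeAvg n u (stdCube n k (dyadicIndex n k x))
  have hP {k : ℤ} {m : Fin n → ℤ} (hmem : x ∈ stdCube n k m) :
      P k ↔ lam < cubeAvg n u (stdCube n k m) := by
    rw [← mem_stdCube_iff.1 hmem]
  obtain ⟨N, hN⟩ := eventually_atTop.1 (eventually_cubeAvg_lt hn hint hu0 hlam)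
  have hbdd : ∀ k, P k → k ≤ N := fun k hk =>
    not_lt.1 fun hlt => (hN k hlt.le _).not_gt hk
  obtain ⟨K, hK, hmax⟩ := Int.exists_greatest_of_bdd ⟨N, hbdd⟩ ⟨k₀, (hP hx).2 havg⟩
  refine ⟨K, _, ⟨hK, fun k m hsub hne => not_lt.1 fun hgt => hne ?_⟩,
    mem_stdCube_dyadicIndex K x⟩
  have hxk : x ∈ stdCube n k m := hsub (mem_stdCube_dyadicIndex K x)
  exact hsub.antisymm
    (stdCube_subset_of_le (hmax k ((hP hxk).2 hgt)) ⟨x, hxk, mem_stdCube_dyadicIndex K x⟩)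

lemma czUnion_anti (hn : n ≠ 0) (hint : Integrable u) (hu0 : 0 ≤ u) (hlam : 0 < lam) {μ : ℝ}
    (hle : lam ≤ μ) : czUnion n u μ ⊆ czUnion n u lam := fun _ ⟨_, _, hcz, hx⟩ =>
  mem_czUnion_of_lt_cubeAvg hn hint hu0 hlam hx (hle.trans_lt hcz.1)

lemma cubeAvg_eq_setAverage (Q : Set (Fin n → ℝ)) : cubeAvg n u Q = ⨍ y in Q, u y := by
  rw [setAverage_eq, smul_eq_mul, measureReal_def, cubeAvg]

/-- In the sup norm of `Fin n → ℝ`, closed balls are closed cubes. -/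
lemma closedBall_eq_pi_Icc (k : ℤ) (m : Fin n → ℤ) :
    Metric.closedBall (fun i => (2 : ℝ) ^ k * (m i + 1 / 2)) (2 ^ k / 2) =
      univ.pi fun i => Icc (2 ^ k * (m i : ℝ)) (2 ^ k * (m i + 1)) := by
  rw [closedBall_pi _ (by positivity)]
  congr 1
  funext i
  rw [Real.closedBall_eq_Icc]
  congr 1 <;> ring

lemma stdCube_subset_closedBall (k : ℤ) (m : Fin n → ℤ) :
    stdCube n k m ⊆ Metric.closedBall (fun i => (2 : ℝ) ^ k * (m i + 1 / 2)) (2 ^ k / 2) := by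
  rw [closedBall_eq_pi_Icc, stdCube_eq_pi]
  exact pi_mono fun _ _ => Ico_subset_Icc_self

lemma stdCube_ae_eq_closedBall (k : ℤ) (m : Fin n → ℤ) :
    stdCube n k m =ᵐ[volume]
      Metric.closedBall (fun i => (2 : ℝ) ^ k * (m i + 1 / 2)) (2 ^ k / 2) := by
  rw [closedBall_eq_pi_Icc, stdCube_eq_pi, volume_pi]
  exact Measure.pi_Ico_ae_eq_pi_Icc

lemma tendsto_cubeAvg_dyadicIndex (hu : LocallyIntegrable u) :
    ∀ᵐ x, Tendsto (fun j : ℕ => cubeAvg n u (stdCube n (-j) (dyadicIndex n (-j) x)))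
      atTop (𝓝 (u x)) := by
  filter_upwards [IsUnifLocDoublingMeasure.ae_tendsto_average volume hu 1] with x hx
  have hδ : Tendsto (fun j : ℕ => (2 : ℝ) ^ (-j : ℤ) / 2) atTop (𝓝[>] 0) := by
    refine tendsto_nhdsWithin_iff.2 ⟨?_, .of_forall fun j => mem_Ioi.2 (by positivity)⟩
    simpa [zpow_neg] using (tendsto_inv_atTop_zero.comp
      (tendsto_pow_atTop_atTop_of_one_lt (one_lt_two : (1 : ℝ) < 2))).div_const 2
  refine (hx (fun j : ℕ => fun i => (2 : ℝ) ^ (-j : ℤ) * (dyadicIndex n (-j) x i + 1 / 2)) _ hδ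
    (.of_forall fun j => ?_)).congr fun j => ?_
  · rw [one_mul]
    exact stdCube_subset_closedBall _ _ (mem_stdCube_dyadicIndex _ x)
  · rw [cubeAvg_eq_setAverage, setAverage_congr (stdCube_ae_eq_closedBall _ _)]

lemma ae_le_of_notMem_czUnion (hn : n ≠ 0) (hint : Integrable u) (hu0 : 0 ≤ u) (hlam : 0 < lam) :
    ∀ᵐ x, x ∉ czUnion n u lam → u x ≤ lam := by
  filter_upwards [tendsto_cubeAvg_dyadicIndex hint.locallyIntegrable] with x hx hnot
  refine not_lt.1 fun hlt => hnot ?_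
  obtain ⟨j, hj⟩ := (hx.eventually (lt_mem_nhds hlt)).exists
  exact mem_czUnion_of_lt_cubeAvg hn hint hu0 hlam (mem_stdCube_dyadicIndex _ x) hj

lemma badPart_eq_zero_of_notMem {x : Fin n → ℝ} (hx : x ∉ czUnion n u lam) :
    badPart n u lam x = 0 :=
  (tsum_congr fun q => indicator_of_notMem (fun hq => hx ⟨_, _, q.2, hq⟩) _).trans tsum_zero

lemma IsCZCube.badPart_eq (hn : n ≠ 0) {k : ℤ} {m : Fin n → ℤ} {x : Fin n → ℝ}
    (hcz : IsCZCube n u lam k m) (hx : x ∈ stdCube n k m) :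
    badPart n u lam x = u x - cubeAvg n u (stdCube n k m) := by
  rw [badPart, tsum_eq_single ⟨(k, m), hcz⟩ fun q hq => indicator_of_notMem (fun hq' => hq ?_) _]
  · exact indicator_of_mem hx _
  · exact Subtype.ext (q.2.eq_of_mem hn hcz hq' hx)

lemma ae_abs_badPart_sub_badPart_le (hn : n ≠ 0) (hint : Integrable u) (hu0 : 0 ≤ u)
    (hlam : 0 < lam) {μ : ℝ} (hle : lam ≤ μ) :
    ∀ᵐ x, |badPart n u lam x - badPart n u μ x| ≤ 2 ^ n * μ := by
  filter_upwards [ae_le_of_notMem_czUnion hn hint hu0 (hlam.trans_le hle)] with x hxμ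
  have h2n : (1 : ℝ) ≤ 2 ^ n := one_le_pow₀ one_le_two
  by_cases hx : x ∈ czUnion n u lam
  · obtain ⟨k, m, hcz, hxQ⟩ := hx
    rw [hcz.badPart_eq hn hxQ]
    have hQ := hcz.cubeAvg_le hn hint hu0
    have hQ₀ := cubeAvg_nonneg hu0 k m
    by_cases hx' : x ∈ czUnion n u μ
    · obtain ⟨k', m', hcz', hxQ'⟩ := hx'
      rw [hcz'.badPart_eq hn hxQ']
      have hQ' := hcz'.cubeAvg_le hn hint hu0
      have hQ'₀ := cubeAvg_nonneg hu0 k' m'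
      rw [abs_le]
      constructor <;> nlinarith
    · rw [badPart_eq_zero_of_notMem hx', sub_zero, abs_le]
      have hux : 0 ≤ u x := hu0 x
      have := hxμ hx'
      constructor <;> nlinarith
  · have hx' : x ∉ czUnion n u μ := fun h => hx (czUnion_anti hn hint hu0 hlam hle h)
    rw [badPart_eq_zero_of_notMem hx, badPart_eq_zero_of_notMem hx', sub_zero, abs_zero]
    have hμ := hlam.trans_le hle
    positivity

lemma badPart_fin_zero (u : (Fin 0 → ℝ) → ℝ) (lam : ℝ) (x : Fin 0 → ℝ) :
    badPart 0 u lam x = 0 := by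
  have hcube (k : ℤ) (m : Fin 0 → ℤ) : stdCube 0 k m = univ :=
    eq_univ_of_forall fun _ => finZeroElim
  have hvol : (volume : Measure (Fin 0 → ℝ)) univ = 1 := by simp [volume_pi]
  have havg : cubeAvg 0 u univ = u x := by
    simp [cubeAvg, integral_unique, measureReal_def, hvol, Unique.eq_default x]
  exact (tsum_congr fun q => by simp [hcube, havg]).trans tsum_zero

/-- For `a > 2ⁿ` and non-negative `u ∈ L^∞_c`, the consecutive bad parts of the
Calderón–Zygmund decompositions at heights `a^k` satisfy
`|b_k(x) - b_{k+1}(x)| ≤ (1+a) 2ⁿ a^k` almost everywhere. -/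
theorem badPart_difference_bound (n : ℕ) (a : ℝ) (ha : (2 : ℝ) ^ n < a)
    (u : (Fin n → ℝ) → ℝ) (hu0 : 0 ≤ u) (humeas : Measurable u)
    (hubd : ∃ M : ℝ, ∀ x, u x ≤ M) (husupp : HasCompactSupport u) (k : ℤ) :
    ∀ᵐ x ∂volume,
      |badPart n u (a ^ k) x - badPart n u (a ^ (k + 1)) x| ≤ (1 + a) * 2 ^ n * a ^ k := by
  have ha1 : 1 < a := (one_le_pow₀ one_le_two).trans_lt ha
  have hak : 0 < a ^ k := zpow_pos (zero_lt_one.trans ha1) k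
  rcases eq_or_ne n 0 with rfl | hn
  · filter_upwards with x
    rw [badPart_fin_zero, badPart_fin_zero, sub_zero, abs_zero]
    positivity
  have hint : Integrable u := by
    obtain ⟨M, hM⟩ := hubd
    refine memLp_one_iff_integrable.1 (husupp.memLp_of_bound humeas.aestronglyMeasurable M ?_)
    exact .of_forall fun x => by rw [Real.norm_of_nonneg (hu0 x)]; exact hM x
  have hstep : a ^ (k + 1) = a * a ^ k := by rw [zpow_add_one₀ (by positivity), mul_comm]
  filter_upwards [ae_abs_badPart_sub_badPart_le hn hint hu0 hak
    (zpow_le_zpow_right₀ ha1.le (Int.le_add_one le_rfl))] with x hx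
  calc _ ≤ 2 ^ n * a ^ (k + 1) := hx
    _ ≤ (1 + a) * 2 ^ n * a ^ k := by
      rw [hstep]
      nlinarith [mul_pos (pow_pos (two_pos : (0 : ℝ) < 2) n) hak]
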